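/- Let d and i be positive integers with P_0^{i-1} < d < P_0^i (where p = 2, so P_j^i = 2^j + ⋯ + 2^i) and suppose d ≠ P_j^i for all j ≤ i. Then there exist a natural number j with j < i−1 and a natural number ℓ ≥ 0 such that d = P_j^{i-1} + ℓ·2^{j+1}. -/

import Mathlib

/-- `Ppow j i = 2^j + 2^(j+1) + ⋯ + 2^i`, the sum of consecutive 2-powers. -/
def Ppow (j i : ℕ) : ℕ := ∑ r ∈ Finset.Icc j i, 2 ^ r

lemma Ppow_add_pow (j i : ℕ) (h : j ≤ i) : Ppow j i + 2 ^ j = 2 ^ (i + 1) := by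
  induction i with
  | zero =>
    interval_cases j
    simp [Ppow]
  | succ n ih =>
    rcases Nat.lt_or_ge j (n + 1) with h' | h'
    · have ih' := ih (by omega)
      have hs : Ppow j (n + 1) = Ppow j n + 2 ^ (n + 1) := by
        unfold Ppow
        rw [Finset.sum_Icc_succ_top (by omega)]
      have h2 : (2 : ℕ) ^ (n + 2) = 2 ^ (n + 1) + 2 ^ (n + 1) := by ring
      omega
    · have hj : j = n + 1 := by omega
      subst hj
      simp [Ppow, Finset.Icc_self]
      ring

theorem stmt_9 (d i : ℕ) (hd : 0 < d) (hi : 0 < i)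
    (h₁ : Ppow 0 (i - 1) < d) (h₂ : d < Ppow 0 i)
    (hne : ∀ j ≤ i, d ≠ Ppow j i) :
    ∃ j ℓ : ℕ, j < i - 1 ∧ d = Ppow j (i - 1) + ℓ * 2 ^ (j + 1) := by
  obtain ⟨j, m, hm, hdm⟩ := Nat.exists_eq_pow_mul_and_not_dvd (n := d) hd.ne' 2 (by norm_num)
  have hmodd : m % 2 = 1 := Nat.two_dvd_ne_zero.mp hm
  have hm1 : 1 ≤ m := by omega
  -- bounds on d
  have hA : Ppow 0 (i - 1) + 1 = 2 ^ i := by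
    have := Ppow_add_pow 0 (i - 1) (Nat.zero_le _)
    simpa [Nat.sub_add_cancel hi] using this
  have hB : Ppow 0 i + 1 = 2 ^ (i + 1) := by
    simpa using Ppow_add_pow 0 i (Nat.zero_le _)
  have hdl : 2 ^ i ≤ d := by omega
  have hdu : d < 2 ^ (i + 1) := by omega
  -- j ≤ i
  have hji : j ≤ i := by
    by_contra hc
    have h1 : 2 ^ (i + 1) ≤ 2 ^ j := Nat.pow_le_pow_right (by norm_num) (by omega)
    have h2 : 2 ^ j ≤ 2 ^ j * m := Nat.le_mul_of_pos_right _ (by omega)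
    omega
  -- j < i - 1
  have hlt : j < i - 1 := by
    by_contra hc
    push_neg at hc
    rcases Nat.eq_or_lt_of_le hji with hji' | hji'
    · -- j = i, so d = 2^i
      subst hji'
      have h2 : 2 ^ j * m < 2 ^ j * 2 := by
        have : (2:ℕ) ^ (j + 1) = 2 ^ j * 2 := by ring
        omega
      have hm2 : m < 2 := lt_of_mul_lt_mul_left h2 (Nat.zero_le _)
      have hmeq : m = 1 := by omega
      have hPii : Ppow j j = 2 ^ j := by
        have := Ppow_add_pow j j le_rfl
        have h3 : (2:ℕ) ^ (j + 1) = 2 ^ j * 2 := by ring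
        omega
      rw [hmeq, mul_one] at hdm
      exact hne j le_rfl (by omega)
    · -- j = i - 1, so d = 3 * 2^(i-1)
      have hj' : j = i - 1 := by omega
      have hji1 : j + 1 = i := by omega
      have h2 : 2 ^ j * 2 ≤ 2 ^ j * m := by
        have : (2:ℕ) ^ i = 2 ^ j * 2 := by rw [← hji1]; ring
        omega
      have h4 : 2 ^ j * m < 2 ^ j * 4 := by
        have : (2:ℕ) ^ (i + 1) = 2 ^ j * 4 := by rw [← hji1]; ring
        omega
      have hm2 : 2 ≤ m := le_of_mul_le_mul_left h2 (by positivity)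
      have hm4 : m < 4 := lt_of_mul_lt_mul_left h4 (Nat.zero_le _)
      have hmeq : m = 3 := by omega
      have hPji : Ppow j i = 2 ^ j * 3 := by
        have := Ppow_add_pow j i hji
        have h3 : (2:ℕ) ^ (i + 1) = 2 ^ j * 4 := by rw [← hji1]; ring
        omega
      rw [hmeq] at hdm
      exact hne j hji (by omega)
  -- main construction
  obtain ⟨k, hk⟩ : ∃ k, m + 1 = 2 * k := ⟨(m + 1) / 2, by omega⟩
  have hE : 2 ^ (j + 1) * 2 ^ (i - j - 1) = 2 ^ i := by
    rw [← pow_add]; congr 1; omega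
  have hdk : d + 2 ^ j = 2 ^ (j + 1) * k := by
    have : (2:ℕ) ^ (j + 1) = 2 ^ j * 2 := by ring
    calc d + 2 ^ j = 2 ^ j * (m + 1) := by rw [hdm]; ring
    _ = 2 ^ (j + 1) * k := by rw [hk, this]; ring
  have hkE : 2 ^ (i - j - 1) ≤ k := by
    have h1 : 2 ^ (j + 1) * 2 ^ (i - j - 1) ≤ 2 ^ (j + 1) * k := by
      rw [hE, ← hdk]
      exact le_trans hdl (Nat.le_add_right _ _)
    exact le_of_mul_le_mul_left h1 (by positivity)
  refine ⟨j, k - 2 ^ (i - j - 1), hlt, ?_⟩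
  have hsplit : 2 ^ (j + 1) * k = 2 ^ i + 2 ^ (j + 1) * (k - 2 ^ (i - j - 1)) := by
    rw [← hE, ← Nat.mul_add, Nat.add_sub_cancel' hkE]
  have hP : Ppow j (i - 1) + 2 ^ j = 2 ^ i := by
    have := Ppow_add_pow j (i - 1) (by omega)
    have h3 : i - 1 + 1 = i := by omega
    rwa [h3] at this
  rw [mul_comm]
  omega
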